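/- arXiv:2506.10232 — 4 statements merged into one kernel-verified Lean document; each statement's English description precedes it below -/
import Mathlib

section
/- In 𝔽₂[x₁,x₂,x₃,x₄] with the total Steenrod squares acting by Sq^1(x_i) = x_i² and the Cartan formula, the following holds in degree 9: x₁x₂⁵x₃²x₄ = Sq²(x₁x₂³x₃²x₄) + x₁x₂³x₃⁴x₄ modulo the image of Sq¹ and Sq². -/
open MvPolynomial

/-- Let `Sq k` be the Steenrod squares on `P₄ = 𝔽₂[x₁,…,x₄]`: the unique `𝔽₂`-linear
operations with `Sq⁰ = id`, `Sq¹ xᵢ = xᵢ²`, `Sq^k xᵢ = 0` for `k ≥ 2`, satisfying the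
Cartan formula.  Then, in degree 9,
`x₁x₂⁵x₃²x₄ = Sq²(x₁x₂³x₃²x₄) + x₁x₂³x₃⁴x₄` modulo `Sq¹((P₄)₈) + Sq²((P₄)₇)`. -/
theorem stmt_11
    (Sq : ℕ → MvPolynomial (Fin 4) (ZMod 2) →ₗ[ZMod 2] MvPolynomial (Fin 4) (ZMod 2))
    (hSq0 : Sq 0 = LinearMap.id)
    (hSq1X : ∀ i : Fin 4, Sq 1 (X i) = X i ^ 2)
    (hSqkX : ∀ k, 2 ≤ k → ∀ i : Fin 4, Sq k (X i) = 0)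
    (hCartan : ∀ (k : ℕ) (f g : MvPolynomial (Fin 4) (ZMod 2)),
      Sq k (f * g) = ∑ i ∈ Finset.range (k + 1), Sq i f * Sq (k - i) g) :
    ∃ p ∈ homogeneousSubmodule (Fin 4) (ZMod 2) 8,
      ∃ q ∈ homogeneousSubmodule (Fin 4) (ZMod 2) 7,
        X (0 : Fin 4) * X 1 ^ 5 * X 2 ^ 2 * X 3
            + Sq 2 (X (0 : Fin 4) * X 1 ^ 3 * X 2 ^ 2 * X 3)
            + X (0 : Fin 4) * X 1 ^ 3 * X 2 ^ 4 * X 3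
          = Sq 1 p + Sq 2 q := by
  have h2 : (2 : MvPolynomial (Fin 4) (ZMod 2)) = 0 := by
    have := CharP.cast_eq_zero (MvPolynomial (Fin 4) (ZMod 2)) 2
    exact_mod_cast this
  have sq1_mul : ∀ f g : MvPolynomial (Fin 4) (ZMod 2),
      Sq 1 (f * g) = Sq 1 f * g + f * Sq 1 g := by
    intro f g
    have := hCartan 1 f g
    simp [hSq0, Finset.sum_range_succ] at this
    rw [this]; ring
  have sq2_mul : ∀ f g : MvPolynomial (Fin 4) (ZMod 2),
      Sq 2 (f * g) = Sq 2 f * g + Sq 1 f * Sq 1 g + f * Sq 2 g := by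
    intro f g
    have := hCartan 2 f g
    simp [hSq0, Finset.sum_range_succ] at this
    rw [this]; ring
  have sq2X : ∀ i : Fin 4, Sq 2 (X i) = 0 := hSqkX 2 le_rfl
  have sq1p2 : ∀ i : Fin 4, Sq 1 (X i ^ 2) = 0 := by
    intro i
    have : Sq 1 (X i * X i) = X i ^ 2 * X i + X i * X i ^ 2 := by
      rw [sq1_mul, hSq1X]
    rw [show X i * X i = X i ^ 2 by ring] at this
    rw [this]
    have : X (R := ZMod 2) i ^ 2 * X i + X i * X i ^ 2
        = 2 * (X i ^ 2 * X i) := by ring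
    rw [this, h2, zero_mul]
  have sq1p3 : ∀ i : Fin 4, Sq 1 (X i ^ 3) = X i ^ 4 := by
    intro i
    have : Sq 1 (X i ^ 2 * X i) = 0 * X i + X i ^ 2 * X i ^ 2 := by
      rw [sq1_mul, sq1p2, hSq1X]
    rw [show X (R := ZMod 2) i ^ 2 * X i = X i ^ 3 by ring] at this
    rw [this]; ring
  have sq1p4 : ∀ i : Fin 4, Sq 1 (X i ^ 4) = 0 := by
    intro i
    have : Sq 1 (X i ^ 2 * X i ^ 2) = 0 * X i ^ 2 + X i ^ 2 * 0 := by
      rw [sq1_mul, sq1p2]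
    rw [show X (R := ZMod 2) i ^ 2 * X i ^ 2 = X i ^ 4 by ring] at this
    rw [this]; ring
  have sq2p2 : ∀ i : Fin 4, Sq 2 (X i ^ 2) = X i ^ 4 := by
    intro i
    have : Sq 2 (X i * X i)
        = 0 * X i + X i ^ 2 * X i ^ 2 + X i * 0 := by
      rw [sq2_mul, hSq1X, sq2X]
    rw [show X (R := ZMod 2) i * X i = X i ^ 2 by ring] at this
    rw [this]; ring
  have sq2p3 : ∀ i : Fin 4, Sq 2 (X i ^ 3) = X i ^ 5 := by
    intro i
    have : Sq 2 (X i ^ 2 * X i)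
        = X i ^ 4 * X i + 0 * X i ^ 2 + X i ^ 2 * 0 := by
      rw [sq2_mul, sq2p2, sq1p2, sq2X, hSq1X]
    rw [show X (R := ZMod 2) i ^ 2 * X i = X i ^ 3 by ring] at this
    rw [this]; ring
  have sq2p4 : ∀ i : Fin 4, Sq 2 (X i ^ 4) = 0 := by
    intro i
    have : Sq 2 (X i ^ 2 * X i ^ 2)
        = X i ^ 4 * X i ^ 2 + 0 * 0 + X i ^ 2 * X i ^ 4 := by
      rw [sq2_mul, sq2p2, sq1p2]
    rw [show X (R := ZMod 2) i ^ 2 * X i ^ 2 = X i ^ 4 by ring] at this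
    rw [this]
    have : X (R := ZMod 2) i ^ 4 * X i ^ 2 + 0 * 0 + X i ^ 2 * X i ^ 4
        = 2 * X i ^ 6 := by ring
    rw [this, h2, zero_mul]
  -- p = x₁² x₂³ x₃ x₄²,  q = x₁ x₂⁴ x₃ x₄
  refine ⟨X 0 ^ 2 * X 1 ^ 3 * X 2 * X 3 ^ 2, ?_,
    X 0 * X 1 ^ 4 * X 2 * X 3, ?_, ?_⟩
  · rw [mem_homogeneousSubmodule]
    have := ((((isHomogeneous_X (ZMod 2) (0 : Fin 4)).pow 2).mul
      ((isHomogeneous_X (ZMod 2) 1).pow 3)).mul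
      (isHomogeneous_X (ZMod 2) 2)).mul
      ((isHomogeneous_X (ZMod 2) 3).pow 2)
    simpa using this
  · rw [mem_homogeneousSubmodule]
    have := (((isHomogeneous_X (ZMod 2) (0 : Fin 4)).mul
      ((isHomogeneous_X (ZMod 2) 1).pow 4)).mul
      (isHomogeneous_X (ZMod 2) 2)).mul
      (isHomogeneous_X (ZMod 2) 3)
    simpa using this
  · simp only [sq2_mul, sq1_mul, hSq1X, sq2X, sq1p2, sq1p3, sq1p4,
      sq2p2, sq2p3, sq2p4]
    ring_nf
    simp [h2]
end

section
/- Let Sq¹ and Sq² act on (P₄)*, the divided power algebra Γ(a₁,a₂,a₃,a₄) over 𝔽₂, on the right via (a_i^{(n)})Sq^t = C(n−t,t)·a_i^{(n−t)} and the Cartan formula. Then the element ζ = a₁^{(1)}a₂^{(3)}a₃^{(3)}a₄^{(2)} + a₁^{(1)}a₂^{(3)}a₃^{(4)}a₄^{(1)} + a₁^{(1)}a₂^{(5)}a₃^{(2)}a₄^{(1)} + a₁^{(1)}a₂^{(6)}a₃^{(1)}a₄^{(1)} of degree 9 satisfies (ζ)Sq¹ = 0 and (ζ)Sq² = 0. 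-/
/-- The right Steenrod action of `Sq^t` on a basis element `∏ᵢ aᵢ^{(d i)}` of the divided
power algebra `Γ(a₁,a₂,a₃,a₄)` over `𝔽₂` (modeled as `(Fin 4 → ℕ) →₀ ZMod 2` on the basis of
exponent vectors), given by the Cartan formula together with
`(aᵢ^{(n)}) Sq^t = C(n-t, t) · aᵢ^{(n-t)}` (zero when `t > n`). -/
noncomputable def sqAct4 (t : ℕ) (d : Fin 4 → ℕ) : (Fin 4 → ℕ) →₀ ZMod 2 :=
  ∑ τ ∈ Finset.Nat.antidiagonalTuple 4 t,
    ((∏ i, Nat.choose (d i - τ i) (τ i) : ℕ) : ZMod 2) •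
      Finsupp.single (fun i => d i - τ i) (1 : ZMod 2)

/-- The linear extension of `sqAct4` to all of `Γ(a₁,…,a₄)`. -/
noncomputable def sqActL (t : ℕ) (ζ : (Fin 4 → ℕ) →₀ ZMod 2) : (Fin 4 → ℕ) →₀ ZMod 2 :=
  ζ.sum fun d c => c • sqAct4 t d

/-! Sq¹ sends the first two terms of ζ to `a₁a₂^{(3)}a₃^{(3)}a₄` and the last two to
`a₁a₂^{(5)}a₃a₄`; Sq² kills the first and the last term and sends the middle two to
`a₁a₂^{(3)}a₃^{(2)}a₄`. Over `𝔽₂` the images therefore cancel in pairs. -/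

open Finset.Nat

lemma sqActL_add (t : ℕ) (f g : (Fin 4 → ℕ) →₀ ZMod 2) :
    sqActL t (f + g) = sqActL t f + sqActL t g :=
  Finsupp.sum_add_index' (fun _ => zero_smul _ _) fun _ _ _ => add_smul _ _ _

lemma sqActL_single (t : ℕ) (d : Fin 4 → ℕ) (c : ZMod 2) :
    sqActL t (Finsupp.single d c) = c • sqAct4 t d :=
  Finsupp.sum_single_index (zero_smul _ _)

-- The coefficient is reduced mod 2 in `ℕ`, so that `simp` evaluates it before casting.
lemma sqAct4_eq_sum_single (t : ℕ) (d : Fin 4 → ℕ) :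
    sqAct4 t d = ∑ τ ∈ antidiagonalTuple 4 t,
      Finsupp.single (d - τ) (((∏ i, (d i - τ i).choose (τ i)) % 2 : ℕ) : ZMod 2) := by
  simp only [sqAct4, Finsupp.smul_single_one, ZMod.natCast_mod]
  rfl

lemma antidiagonalTuple_four_one : antidiagonalTuple 4 1 =
    {![1, 0, 0, 0], ![0, 1, 0, 0], ![0, 0, 1, 0], ![0, 0, 0, 1]} := by
  decide

lemma antidiagonalTuple_four_two : antidiagonalTuple 4 2 =
    {![2, 0, 0, 0], ![1, 1, 0, 0], ![1, 0, 1, 0], ![1, 0, 0, 1], ![0, 2, 0, 0], ![0, 1, 1, 0],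
      ![0, 1, 0, 1], ![0, 0, 2, 0], ![0, 0, 1, 1], ![0, 0, 0, 2]} := by
  decide

lemma sqAct4_one_summands :
    sqAct4 1 ![1, 3, 3, 2] = Finsupp.single ![1, 3, 3, 1] 1 ∧
    sqAct4 1 ![1, 3, 4, 1] = Finsupp.single ![1, 3, 3, 1] 1 ∧
    sqAct4 1 ![1, 5, 2, 1] = Finsupp.single ![1, 5, 1, 1] 1 ∧
    sqAct4 1 ![1, 6, 1, 1] = Finsupp.single ![1, 5, 1, 1] 1 := by
  refine ⟨?_, ?_, ?_, ?_⟩ <;>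
    simp [sqAct4_eq_sum_single, antidiagonalTuple_four_one, Finset.sum_insert,
      Fin.prod_univ_four, -Nat.cast_prod, -ZMod.natCast_mod, -Finsupp.single_mul]

lemma sqAct4_two_summands :
    sqAct4 2 ![1, 3, 3, 2] = 0 ∧
    sqAct4 2 ![1, 3, 4, 1] = Finsupp.single ![1, 3, 2, 1] 1 ∧
    sqAct4 2 ![1, 5, 2, 1] = Finsupp.single ![1, 3, 2, 1] 1 ∧
    sqAct4 2 ![1, 6, 1, 1] = 0 := by
  refine ⟨?_, ?_, ?_, ?_⟩ <;>
    simp [sqAct4_eq_sum_single, antidiagonalTuple_four_two, Finset.sum_insert,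
      Fin.prod_univ_four, Nat.choose_two_right, -Nat.cast_prod, -ZMod.natCast_mod,
      -Finsupp.single_mul]

/-- The element
`ζ = a₁^{(1)}a₂^{(3)}a₃^{(3)}a₄^{(2)} + a₁^{(1)}a₂^{(3)}a₃^{(4)}a₄^{(1)}
   + a₁^{(1)}a₂^{(5)}a₃^{(2)}a₄^{(1)} + a₁^{(1)}a₂^{(6)}a₃^{(1)}a₄^{(1)}`
of degree 9 satisfies `(ζ)Sq¹ = 0` and `(ζ)Sq² = 0`. -/
theorem stmt_12 :
    sqActL 1 (Finsupp.single ![1, 3, 3, 2] 1 + Finsupp.single ![1, 3, 4, 1] 1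
        + Finsupp.single ![1, 5, 2, 1] 1 + Finsupp.single ![1, 6, 1, 1] 1) = 0 ∧
    sqActL 2 (Finsupp.single ![1, 3, 3, 2] 1 + Finsupp.single ![1, 3, 4, 1] 1
        + Finsupp.single ![1, 5, 2, 1] 1 + Finsupp.single ![1, 6, 1, 1] 1) = 0 := by
  obtain ⟨h₁, h₂, h₃, h₄⟩ := sqAct4_one_summands
  obtain ⟨k₁, k₂, k₃, k₄⟩ := sqAct4_two_summands
  simp only [sqActL_add, sqActL_single, one_smul, h₁, h₂, h₃, h₄, k₁, k₂, k₃, k₄]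
  constructor <;>
    simp only [← Finsupp.single_add, CharTwo.add_self_eq_zero, Finsupp.single_zero, add_zero,
      zero_add]
end

section
/- The element ζ_s = a₂^{(2^{s+1}−1)} a₃^{(2^{s+1}−1)} a₄^{(2^{s+1}−1)} of the divided power algebra Γ(a₁,a₂,a₃,a₄) over 𝔽₂, in degree 3·2^{s+1} − 3, is annihilated by Sq^t for every t ≥ 1 and every s ≥ 0. -/
/-- Key parity fact: `C(2^(k+1) - 1 - t, t)` is even for every `t ≥ 1`. -/
lemma key : ∀ k t : ℕ, 1 ≤ t → 2 ∣ Nat.choose (2 ^ (k + 1) - 1 - t) t := by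
  intro k
  induction k with
  | zero =>
    intro t ht
    rw [Nat.choose_eq_zero_of_lt (by omega)]; exact dvd_zero 2
  | succ k ih =>
    intro t ht
    show 2 ∣ Nat.choose (2 ^ (k + 2) - 1 - t) t
    rcases lt_or_ge (2 ^ (k + 2) - 1 - t) t with h | h
    · rw [Nat.choose_eq_zero_of_lt h]; exact dvd_zero 2
    · have hpow : 2 ^ (k + 2) = 2 * 2 ^ (k + 1) := by ring
      have hpow1 : 1 ≤ 2 ^ (k + 1) := Nat.one_le_two_pow
      have hlucas := @Choose.choose_modEq_choose_mod_mul_choose_div_nat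
        (2 ^ (k + 2) - 1 - t) t 2 ⟨Nat.prime_two⟩
      apply (Nat.ModEq.dvd_iff hlucas (dvd_refl 2)).mpr
      rcases Nat.even_or_odd t with he | ho
      · obtain ⟨u, hu⟩ := he
        have hu1 : 1 ≤ u := by omega
        have key2 : 2 ^ (k + 2) - 1 - t = 2 * (2 ^ (k + 1) - 1 - u) + 1 := by omega
        have hdiv : (2 ^ (k + 2) - 1 - t) / 2 = 2 ^ (k + 1) - 1 - u := by omega
        have ht2' : t / 2 = u := by omega
        rw [hdiv, ht2']
        exact (ih u hu1).mul_left _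
      · obtain ⟨v, hv⟩ := ho
        have hmod : (2 ^ (k + 2) - 1 - t) % 2 = 0 := by omega
        rw [hmod]
        have : t % 2 = 1 := by omega
        rw [this]
        simp [Nat.choose_eq_zero_of_lt]

/-- The element `ζ_s = a₂^{(2^{s+1}-1)} a₃^{(2^{s+1}-1)} a₄^{(2^{s+1}-1)}` of degree
`3·2^{s+1} - 3` is annihilated by `Sq^t` for every `t ≥ 1` and every `s ≥ 0`. -/
theorem stmt_13 (s t : ℕ) (ht : 1 ≤ t) :
    sqActL t (Finsupp.single
      ![0, 2 ^ (s + 1) - 1, 2 ^ (s + 1) - 1, 2 ^ (s + 1) - 1] 1) = 0 := by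
  set d : Fin 4 → ℕ := ![0, 2 ^ (s + 1) - 1, 2 ^ (s + 1) - 1, 2 ^ (s + 1) - 1] with hd
  rw [sqActL, Finsupp.sum_single_index (by simp), one_smul, sqAct4]
  apply Finset.sum_eq_zero
  intro τ hτ
  rw [Finset.Nat.mem_antidiagonalTuple] at hτ
  have hex : ∃ i : Fin 4, 1 ≤ τ i := by
    by_contra hc
    push_neg at hc
    simp only [Nat.lt_one_iff] at hc
    have : ∑ i, τ i = 0 := Finset.sum_eq_zero fun i _ => hc i
    omega
  obtain ⟨i, hi⟩ := hex
  have hzero : ((Nat.choose (d i - τ i) (τ i) : ℕ) : ZMod 2) = 0 := by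
    rcases eq_or_ne i 0 with rfl | hne
    · have hd0 : d 0 = 0 := rfl
      rw [hd0, Nat.zero_sub, Nat.choose_eq_zero_of_lt (by omega)]
      simp
    · have hdi : d i = 2 ^ (s + 1) - 1 := by
        fin_cases i
        · exact absurd rfl hne
        all_goals rfl
      rw [hdi]
      exact (ZMod.natCast_eq_zero_iff _ 2).mpr (key s (τ i) hi)
  have : ((∏ j, Nat.choose (d j - τ j) (τ j) : ℕ) : ZMod 2) = 0 := by
    push_cast
    exact Finset.prod_eq_zero (Finset.mem_univ i) hzero
  rw [this, zero_smul]
end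

section
/- For every natural number a ≥ 1, writing m = 2a: the binomial coefficient C(2a − j − 1, j) taken mod 2 vanishes for all j ≥ 1 if and only if a is a power of 2. -/
/-- Lucas' theorem step for p = 2. -/
lemma lucas_two (n k : ℕ) :
    Nat.choose n k % 2 = (Nat.choose (n % 2) (k % 2) * Nat.choose (n / 2) (k / 2)) % 2 := by
  haveI : Fact (Nat.Prime 2) := ⟨Nat.prime_two⟩
  exact Choose.choose_modEq_choose_mod_mul_choose_div_nat

/-- All binomial coefficients `C(2^m - 1 - j, j)` with `j ≥ 1` are even. -/
lemma even_choose_pow_sub (m : ℕ) : ∀ j, 1 ≤ j → Nat.choose (2 ^ m - 1 - j) j % 2 = 0 := by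
  induction m with
  | zero =>
    intro j hj
    simp only [pow_zero]
    have : (1 : ℕ) - 1 - j = 0 := by omega
    rw [this, Nat.choose_eq_zero_of_lt hj]
  | succ m ih =>
    intro j hj
    set N := 2 ^ (m + 1) - 1 with hN
    have hNval : N = 2 * 2 ^ m - 1 := by rw [hN]; ring_nf
    have h2m : 1 ≤ 2 ^ m := Nat.one_le_two_pow
    by_cases hle : j ≤ N
    · rcases Nat.even_or_odd j with hje | hjo
      · -- j even
        obtain ⟨c, hc⟩ := hje
        have hxmod : (N - j) % 2 = 1 := by omega
        have hjmod : j % 2 = 0 := by omega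
        have hxdiv : (N - j) / 2 = 2 ^ m - 1 - c := by omega
        have hjdiv : j / 2 = c := by omega
        rw [lucas_two, hxmod, hjmod, hxdiv, hjdiv]
        have hc1 : 1 ≤ c := by omega
        have := ih c hc1
        simpa [Nat.choose] using this
      · -- j odd
        obtain ⟨c, hc⟩ := hjo
        have hxmod : (N - j) % 2 = 0 := by omega
        have hjmod : j % 2 = 1 := by omega
        rw [lucas_two, hxmod, hjmod]
        simp
    · have : N - j = 0 := by omega
      rw [this, Nat.choose_eq_zero_of_lt hj]

/-- `C(2^t * c + (2^t - 1), 2^t)` is odd when `c` is odd. -/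
lemma odd_choose_aux : ∀ t c : ℕ, c % 2 = 1 →
    Nat.choose (2 ^ t * c + (2 ^ t - 1)) (2 ^ t) % 2 = 1 := by
  intro t
  induction t with
  | zero =>
    intro c hc
    simpa using hc
  | succ t ih =>
    intro c hc
    have h2t : 1 ≤ 2 ^ t := Nat.one_le_two_pow
    set x := 2 ^ (t + 1) * c + (2 ^ (t + 1) - 1) with hx
    have hxval : x = 2 * (2 ^ t * c + (2 ^ t - 1)) + 1 := by
      rw [hx, pow_succ]; ring_nf; omega
    have hxmod : x % 2 = 1 := by omega
    have hxdiv : x / 2 = 2 ^ t * c + (2 ^ t - 1) := by omega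
    have hjval : 2 ^ (t + 1) = 2 * 2 ^ t := by rw [pow_succ]; ring
    have hjmod : 2 ^ (t + 1) % 2 = 0 := by omega
    have hjdiv : 2 ^ (t + 1) / 2 = 2 ^ t := by omega
    rw [lucas_two, hxmod, hjmod, hxdiv, hjdiv]
    simpa using ih c hc

/-- For every `a ≥ 1`: the binomial coefficients `C(2a - j - 1, j)` are all even for `j ≥ 1`
if and only if `a` is a power of `2`.  (Equivalently, `λ_n` with `n = 2a - 1` is a cycle in
the mod-2 lambda algebra iff `n + 1` is a power of `2`.) -/
theorem stmt_15 (a : ℕ) (ha : 1 ≤ a) :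
    (∀ j, 1 ≤ j → Nat.choose (2 * a - j - 1) j % 2 = 0) ↔ ∃ k, a = 2 ^ k := by
  constructor
  · intro h
    obtain ⟨s, b, hb, hab⟩ := Nat.exists_eq_pow_mul_and_not_dvd (by omega : a ≠ 0) 2 (by norm_num)
    have hbodd : b % 2 = 1 := by
      rcases Nat.mod_two_eq_zero_or_one b with h0 | h1
      · exact absurd (Nat.dvd_of_mod_eq_zero h0) hb
      · exact h1
    by_cases hb1 : b = 1
    · exact ⟨s, by rw [hab, hb1, mul_one]⟩
    · exfalso
      have hb3 : 3 ≤ b := by omega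
      have h2s : 1 ≤ 2 ^ s := Nat.one_le_two_pow
      -- take j = 2^(s+1)
      have hkey := odd_choose_aux (s + 1) (b - 2) (by omega)
      obtain ⟨c, hc⟩ : ∃ c, b = c + 3 := ⟨b - 3, by omega⟩
      have harg : 2 * a - 2 ^ (s + 1) - 1 = 2 ^ (s + 1) * (b - 2) + (2 ^ (s + 1) - 1) := by
        have ha2 : 2 * a = 2 ^ (s + 1) * b := by rw [hab, pow_succ]; ring
        have e1 : 2 ^ (s + 1) * (c + 3) = 2 ^ (s + 1) * c + 3 * 2 ^ (s + 1) := by ring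
        have e2 : 2 ^ (s + 1) * (c + 1) = 2 ^ (s + 1) * c + 2 ^ (s + 1) := by ring
        have hP1 : 1 ≤ 2 ^ (s + 1) := Nat.one_le_two_pow
        subst hc
        have hb2 : c + 3 - 2 = c + 1 := by omega
        rw [ha2, hb2, e1, e2]
        omega
      have := h (2 ^ (s + 1)) Nat.one_le_two_pow
      rw [harg] at this
      omega
  · rintro ⟨k, rfl⟩ j hj
    have harg : 2 * 2 ^ k - j - 1 = 2 ^ (k + 1) - 1 - j := by
      rw [pow_succ]; omega
    rw [harg]
    exact even_choose_pow_sub (k + 1) j hj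
end
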